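/- Let Ω ⊆ ℂⁿ be a domain, p ∈ ∂Ω a k-point, and suppose the estimate k_Ω(z,w) ≤ log(1 + 2‖z-w‖/√(δ_Ω(z)δ_Ω(w))) holds for z,w ∈ Ω in some neighbourhood U₀ of p. Then p is a w-point: for every neighbourhood U of p with Ω\U ≠ ∅, lim_{z,w→p} inf_{o∈Ω\U} (z|w)^Ω_o = ∞. -/

import Mathlib

open Set Metric Filter Topology MeasureTheory

noncomputable section

/-- Inverse hyperbolic tangent. -/
def artanh (x : ℝ) : ℝ := (1 / 2) * Real.log ((1 + x) / (1 - x))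

variable {n : ℕ}

/-- The extremal quantity `l̃_Ω` in the definition of the Lempert function:
the infimum of `|α|` over holomorphic discs `φ : Δ → Ω` with `φ 0 = z`, `φ α = w`. -/
def lempertT (Ω : Set (EuclideanSpace ℂ (Fin n))) (z w : EuclideanSpace ℂ (Fin n)) : ℝ :=
  sInf {r : ℝ | ∃ (α : ℂ) (φ : ℂ → EuclideanSpace ℂ (Fin n)), r = ‖α‖ ∧ α ∈ ball (0 : ℂ) 1 ∧
    DifferentiableOn ℂ φ (ball (0 : ℂ) 1) ∧ MapsTo φ (ball (0 : ℂ) 1) Ω ∧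
    φ 0 = z ∧ φ α = w}

/-- The Lempert function `l_Ω = artanh l̃_Ω`. -/
def lempert (Ω : Set (EuclideanSpace ℂ (Fin n))) (z w : EuclideanSpace ℂ (Fin n)) : ℝ :=
  artanh (lempertT Ω z w)

/-- The Kobayashi pseudodistance: the largest pseudodistance below the Lempert function,
realized as the infimum over chains. -/
def kobDist (Ω : Set (EuclideanSpace ℂ (Fin n))) (z w : EuclideanSpace ℂ (Fin n)) : ℝ :=
  sInf {r : ℝ | ∃ (m : ℕ) (x : ℕ → EuclideanSpace ℂ (Fin n)), x 0 = z ∧ x m = w ∧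
    (∀ i ≤ m, x i ∈ Ω) ∧ r = ∑ i ∈ Finset.range m, lempert Ω (x i) (x (i + 1))}

/-- The Kobayashi–Royden pseudometric. -/
def kobRoyden (Ω : Set (EuclideanSpace ℂ (Fin n))) (z v : EuclideanSpace ℂ (Fin n)) : ℝ :=
  sInf {r : ℝ | ∃ (c : ℂ) (φ : ℂ → EuclideanSpace ℂ (Fin n)), r = ‖c‖ ∧
    DifferentiableOn ℂ φ (ball (0 : ℂ) 1) ∧ MapsTo φ (ball (0 : ℂ) 1) Ω ∧
    φ 0 = z ∧ c • deriv φ 0 = v}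

/-- The Kobayashi–Royden length of a curve `γ` on `[a,b]`. -/
def kobLength (Ω : Set (EuclideanSpace ℂ (Fin n))) (γ : ℝ → EuclideanSpace ℂ (Fin n))
    (a b : ℝ) : ℝ := ∫ t in a..b, kobRoyden Ω (γ t) (deriv γ t)

/-- An `ε`-geodesic for the Kobayashi length: an (absolutely) continuous curve in `Ω`
whose Kobayashi–Royden length exceeds the Kobayashi distance of its endpoints by at most `ε`. -/
def IsEpsGeodesic (Ω : Set (EuclideanSpace ℂ (Fin n))) (γ : ℝ → EuclideanSpace ℂ (Fin n))
    (a b : ℝ) (ε : ℝ) : Prop :=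
  a ≤ b ∧ ContinuousOn γ (Icc a b) ∧ MapsTo γ (Icc a b) Ω ∧
    kobLength Ω γ a b ≤ kobDist Ω (γ a) (γ b) + ε

/-- The Gromov product with respect to the Kobayashi distance. -/
def gromovK (Ω : Set (EuclideanSpace ℂ (Fin n))) (z w o : EuclideanSpace ℂ (Fin n)) : ℝ :=
  (kobDist Ω z o + kobDist Ω w o - kobDist Ω z w) / 2

/-- `p ∈ ∂Ω` is a `w`-point: for every neighbourhood `U` of `p` with `Ω \ U ≠ ∅`,
`lim_{z,w→p} inf_{o ∈ Ω \ U} (z|w)^Ω_o = ∞`. -/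
def IsWPoint (Ω : Set (EuclideanSpace ℂ (Fin n))) (p : EuclideanSpace ℂ (Fin n)) : Prop :=
  ∀ U ∈ 𝓝 p, (Ω \ U).Nonempty →
    ∀ M : ℝ, ∃ V ∈ 𝓝 p, ∀ z ∈ Ω ∩ V, ∀ w ∈ Ω ∩ V, ∀ o ∈ Ω \ U, M ≤ gromovK Ω z w o

/-- `p ∈ ∂Ω` is a `v`-point: `Ω` satisfies the weak Gromov property at `p`, i.e.
`liminf_{z→p, w→q} (k_Ω(z,w) - k_Ω(z,o)) > -∞` for every `o ∈ Ω` and every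
boundary point `q ≠ p`. -/
def IsVPoint (Ω : Set (EuclideanSpace ℂ (Fin n))) (p : EuclideanSpace ℂ (Fin n)) : Prop :=
  ∀ o ∈ Ω, ∀ q ∈ frontier Ω, q ≠ p →
    ∃ (M : ℝ) (V : Set (EuclideanSpace ℂ (Fin n))) (W : Set (EuclideanSpace ℂ (Fin n))),
      V ∈ 𝓝 p ∧ W ∈ 𝓝 q ∧ ∀ z ∈ Ω ∩ V, ∀ w ∈ Ω ∩ W, M ≤ kobDist Ω z w - kobDist Ω z o

/-- The Euclidean distance to the boundary. -/
def bdist (Ω : Set (EuclideanSpace ℂ (Fin n))) (z : EuclideanSpace ℂ (Fin n)) : ℝ :=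
  Metric.infDist z (frontier Ω)

end

/-- `p ∈ ∂Ω` is a `k`-point: for every neighbourhood `U` of `p`,
`liminf_{z→p} (k_Ω(z, Ω\U) − (1/2)log(1/δ_Ω(z))) > −∞`. -/
def IsKPoint {n : ℕ} (Ω : Set (EuclideanSpace ℂ (Fin n)))
    (p : EuclideanSpace ℂ (Fin n)) : Prop :=
  ∀ U ∈ 𝓝 p, ∃ C : ℝ, ∃ V ∈ 𝓝 p, ∀ z ∈ Ω ∩ V, ∀ o ∈ Ω \ U,
    (1 / 2) * Real.log (1 / bdist Ω z) - C ≤ kobDist Ω z o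

/-!
Write `δ = δ_Ω`. Near `p` the `k`-point bound gives `2 k_Ω(·, o) ≥ log(1/δ) - 2C` for `o ∈ Ω \ U`,
while the hypothesis on `k_Ω(z, w)` rewrites as
`k_Ω(z, w) ≤ log(√(δ(z)δ(w)) + 2‖z - w‖) - (log δ(z) + log δ(w)) / 2`.
The `log δ` terms cancel in `2 (z|w)_o`, leaving `2 (z|w)_o ≥ -log(√(δ(z)δ(w)) + 2‖z - w‖) - 2C`,
and `√(δ(z)δ(w)) + 2‖z - w‖ → 0` as `z, w → p` because `δ(x) ≤ ‖x - p‖`.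
-/

lemma Real.log_one_add_div {s u : ℝ} (hs : 0 < s) (hsu : 0 < s + u) :
    Real.log (1 + u / s) = Real.log (s + u) - Real.log s := by
  rw [← Real.log_div hsu.ne' hs.ne', add_div, div_self hs.ne']

section Kobayashi

variable {n : ℕ} {Ω : Set (EuclideanSpace ℂ (Fin n))}

lemma bdist_pos {x : EuclideanSpace ℂ (Fin n)} (hΩ : IsOpen Ω) (hfr : (frontier Ω).Nonempty)
    (hx : x ∈ Ω) : 0 < bdist Ω x := by
  have hx' : x ∉ frontier Ω := fun h => h.2 (hΩ.interior_eq.symm ▸ hx)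
  exact (isClosed_frontier.notMem_iff_infDist_pos hfr).1 hx'

lemma bdist_lt_of_mem_ball {p x : EuclideanSpace ℂ (Fin n)} {r : ℝ} (hp : p ∈ frontier Ω)
    (hx : x ∈ ball p r) : bdist Ω x < r :=
  (infDist_le_dist_of_mem hp).trans_lt hx

lemma sqrt_bdist_mul_add_two_mul_norm_sub_lt {p z w : EuclideanSpace ℂ (Fin n)} {r : ℝ}
    (hp : p ∈ frontier Ω) (hz : z ∈ ball p r) (hw : w ∈ ball p r) :
    √(bdist Ω z * bdist Ω w) + 2 * ‖z - w‖ < 5 * r := by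
  have hr : 0 < r := pos_of_mem_ball hz
  have hsqrt : √(bdist Ω z * bdist Ω w) ≤ r := by
    rw [Real.sqrt_le_left hr.le, sq]
    exact mul_le_mul (bdist_lt_of_mem_ball hp hz).le (bdist_lt_of_mem_ball hp hw).le
      infDist_nonneg hr.le
  have hzw : ‖z - w‖ < 2 * r := by
    rw [← dist_eq_norm]
    linarith [dist_triangle_right z w p, mem_ball.mp hz, mem_ball.mp hw]
  linarith

lemma neg_log_sqrt_bdist_mul_add_le_gromovK {z w o : EuclideanSpace ℂ (Fin n)} {C : ℝ}
    (hz : 0 < bdist Ω z) (hw : 0 < bdist Ω w)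
    (hzo : (1 / 2) * Real.log (1 / bdist Ω z) - C ≤ kobDist Ω z o)
    (hwo : (1 / 2) * Real.log (1 / bdist Ω w) - C ≤ kobDist Ω w o)
    (hzw : kobDist Ω z w ≤
      Real.log (1 + 2 * ‖z - w‖ / √(bdist Ω z * bdist Ω w))) :
    -Real.log (√(bdist Ω z * bdist Ω w) + 2 * ‖z - w‖) / 2 - C ≤ gromovK Ω z w o := by
  have hs : 0 < √(bdist Ω z * bdist Ω w) := Real.sqrt_pos.2 (mul_pos hz hw)
  have hlog_sqrt : Real.log √(bdist Ω z * bdist Ω w) =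
      (Real.log (bdist Ω z) + Real.log (bdist Ω w)) / 2 := by
    rw [Real.log_sqrt (mul_pos hz hw).le, Real.log_mul hz.ne' hw.ne']
  rw [Real.log_one_add_div hs (by positivity), hlog_sqrt] at hzw
  simp only [one_div, Real.log_inv] at hzo hwo
  unfold gromovK
  linarith

end Kobayashi

theorem stmt_11_general {n : ℕ} (Ω : Set (EuclideanSpace ℂ (Fin n)))
    (hΩ : IsOpen Ω)
    (p : EuclideanSpace ℂ (Fin n)) (hp : p ∈ frontier Ω)
    (hk : IsKPoint Ω p)
    (hdini : ∃ U₀ ∈ 𝓝 p, ∀ z ∈ Ω ∩ U₀, ∀ w ∈ Ω ∩ U₀,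
      kobDist Ω z w ≤ Real.log (1 + 2 * ‖z - w‖ / Real.sqrt (bdist Ω z * bdist Ω w))) :
    IsWPoint Ω p := by
  intro U hU _ M
  obtain ⟨C, V, hV, hC⟩ := hk U hU
  obtain ⟨U₀, hU₀, hd⟩ := hdini
  -- the radius `r` is chosen so that `log (5 * r) = -2M - 2C`
  refine ⟨V ∩ U₀ ∩ ball p (Real.exp (-(2 * M) - 2 * C) / 5),
    inter_mem (inter_mem hV hU₀) (ball_mem_nhds p (by positivity)), ?_⟩
  rintro z ⟨hzΩ, ⟨hzV, hzU₀⟩, hzr⟩ w ⟨hwΩ, ⟨hwV, hwU₀⟩, hwr⟩ o ho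
  have hδz := bdist_pos hΩ ⟨p, hp⟩ hzΩ
  have hδw := bdist_pos hΩ ⟨p, hp⟩ hwΩ
  have hgromov := neg_log_sqrt_bdist_mul_add_le_gromovK hδz hδw (hC z ⟨hzΩ, hzV⟩ o ho)
    (hC w ⟨hwΩ, hwV⟩ o ho) (hd z ⟨hzΩ, hzU₀⟩ w ⟨hwΩ, hwU₀⟩)
  have hlog : Real.log (√(bdist Ω z * bdist Ω w) + 2 * ‖z - w‖) < -(2 * M) - 2 * C := by
    rw [Real.log_lt_iff_lt_exp (by positivity)]
    linarith [sqrt_bdist_mul_add_two_mul_norm_sub_lt hp hzr hwr]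
  linarith

/-- second half of Proposition 5. Let `Ω ⊆ ℂⁿ` be a domain and `p ∈ ∂Ω` a
`k`-point such that `k_Ω(z,w) ≤ log(1 + 2‖z−w‖/√(δ_Ω(z)δ_Ω(w)))` holds for `z, w ∈ Ω` in
some neighbourhood `U₀` of `p`. Then `p` is a `w`-point. -/
theorem stmt_11 {n : ℕ} (Ω : Set (EuclideanSpace ℂ (Fin n)))
    (hΩ : IsOpen Ω) (hΩc : IsConnected Ω)
    (p : EuclideanSpace ℂ (Fin n)) (hp : p ∈ frontier Ω)
    (hk : IsKPoint Ω p)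
    (hdini : ∃ U₀ ∈ 𝓝 p, ∀ z ∈ Ω ∩ U₀, ∀ w ∈ Ω ∩ U₀,
      kobDist Ω z w ≤ Real.log (1 + 2 * ‖z - w‖ / Real.sqrt (bdist Ω z * bdist Ω w))) :
    IsWPoint Ω p :=
  stmt_11_general Ω hΩ p hp hk hdini
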